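/- arXiv:1411.1747 — 11 statements merged into one kernel-verified Lean document; each statement's English description precedes it below -/
import Mathlib

section
/- If z and z' are distinct (u,v)-orphans, then the sets of rational numbers appearing as vertices of the (u,v)-Calkin-Wilf trees rooted at z and z' are disjoint. -/
/-- Membership in the (u,v)-Calkin-Wilf tree rooted at `z`. -/
inductive CWVertex (u v : ℕ) (z : ℚ) : ℚ → Prop
  | root : CWVertex u v z z
  | left {w : ℚ} : CWVertex u v z w → CWVertex u v z (w / (u * w + 1))
  | right {w : ℚ} : CWVertex u v z w → CWVertex u v z (w + v)

lemma CW_pos {u v : ℕ} {z : ℚ} (hz : 0 < z) : ∀ {w : ℚ}, CWVertex u v z w → 0 < w := by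
  intro w h
  induction h with
  | root => exact hz
  | left h ih => positivity
  | right h ih =>
      have : (0:ℚ) ≤ v := by positivity
      linarith

lemma CW_left_lt {u : ℕ} (hu : 0 < u) {w : ℚ} (hw : 0 < w) :
    w / (u * w + 1) < 1 / u := by
  have hu' : (0:ℚ) < u := by exact_mod_cast hu
  rw [div_lt_div_iff₀ (by positivity) hu']
  nlinarith

lemma CW_root_eq (u v : ℕ) (hu : 0 < u) (hv : 0 < v)
    (z z' : ℚ) (hz : 0 < z) (hz' : 0 < z')
    (hoz : 1 / (u : ℚ) ≤ z ∧ z ≤ v) (hoz' : 1 / (u : ℚ) ≤ z' ∧ z' ≤ v) :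
    ∀ w : ℚ, CWVertex u v z w → CWVertex u v z' w → z = z' := by
  have hu' : (0:ℚ) < u := by exact_mod_cast hu
  have hv' : (0:ℚ) < v := by exact_mod_cast hv
  have huv : 1 / (u:ℚ) ≤ v := by
    rw [div_le_iff₀ hu']
    have h1 : (1:ℚ) ≤ u := by exact_mod_cast hu
    have h2 : (1:ℚ) ≤ v := by exact_mod_cast hv
    nlinarith
  intro w h1
  induction h1 with
  | root =>
      intro h2
      cases h2 with
      | root => rfl
      | @left w' h' =>
          exfalso
          have hw' : 0 < w' := CW_pos hz' h'
          have := CW_left_lt hu hw'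
          linarith [hoz.1]
      | @right w' h' =>
          exfalso
          have hw' : 0 < w' := CW_pos hz' h'
          linarith [hoz.2]
  | @left w h ih =>
      intro h2
      have hw : 0 < w := CW_pos hz h
      generalize hgen : w / (u * w + 1) = x at h2
      cases h2 with
      | root =>
          exfalso
          have := CW_left_lt hu hw
          rw [hgen] at this
          linarith [hoz'.1]
      | @left w' h' =>
          have hw' : 0 < w' := CW_pos hz' h'
          have heq : w / (u * w + 1) = w' / (u * w' + 1) := hgen
          rw [div_eq_div_iff (by positivity) (by positivity)] at heq
          have : w = w' := by nlinarith
          subst this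
          exact ih h'
      | @right w' h' =>
          exfalso
          have hw' : 0 < w' := CW_pos hz' h'
          have := CW_left_lt hu hw
          have heq : w / (u * w + 1) = w' + v := hgen
          linarith
  | @right w h ih =>
      intro h2
      have hw : 0 < w := CW_pos hz h
      generalize hgen : w + (v:ℚ) = x at h2
      cases h2 with
      | root =>
          exfalso
          linarith [hoz'.2]
      | @left w' h' =>
          exfalso
          have hw' : 0 < w' := CW_pos hz' h'
          have := CW_left_lt hu hw'
          have heq : w + v = w' / (u * w' + 1) := hgen
          linarith
      | @right w' h' =>
          have heq : w + (v:ℚ) = w' + v := hgen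
          have : w = w' := by linarith
          subst this
          exact ih h'

theorem orphan_trees_disjoint (u v : ℕ) (hu : 0 < u) (hv : 0 < v)
    (z z' : ℚ) (hz : 0 < z) (hz' : 0 < z')
    (hoz : 1 / (u : ℚ) ≤ z ∧ z ≤ v) (hoz' : 1 / (u : ℚ) ≤ z' ∧ z' ≤ v)
    (hne : z ≠ z') :
    ∀ w : ℚ, ¬(CWVertex u v z w ∧ CWVertex u v z' w) := by
  rintro w ⟨h1, h2⟩
  exact hne (CW_root_eq u v hu hv z z' hz hz' hoz hoz' w h1 h2)
end

section
/- A positive rational number q is not the child (left or right) of any positive rational in any (u,v)-Calkin-Wilf tree if and only if 1/u ≤ q ≤ v. -/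
section ChildPreimages

variable {K : Type*} [Field K] [LinearOrder K] [IsStrictOrderedRing K]

theorem exists_pos_eq_div_mul_add_one_iff {a q : K} (ha : 0 ≤ a) :
    (∃ w : K, 0 < w ∧ q = w / (a * w + 1)) ↔ 0 < q ∧ a * q < 1 := by
  constructor
  · rintro ⟨w, hw, rfl⟩
    have hden : 0 < a * w + 1 := by positivity
    refine ⟨div_pos hw hden, ?_⟩
    rw [mul_div_assoc', div_lt_one hden]
    linarith
  · rintro ⟨hq, haq⟩
    have hden : 0 < 1 - a * q := by linarith
    refine ⟨q / (1 - a * q), div_pos hq hden, ?_⟩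
    have hsum : a * (q / (1 - a * q)) + 1 = 1 / (1 - a * q) := by
      field_simp
      ring
    rw [hsum, div_div_div_cancel_right₀ hden.ne', div_one]

theorem exists_pos_eq_add_iff {c q : K} : (∃ w : K, 0 < w ∧ q = w + c) ↔ c < q :=
  ⟨fun ⟨w, hw, hq⟩ => by linarith, fun h => ⟨q - c, sub_pos.mpr h, by ring⟩⟩

end ChildPreimages

theorem orphan_characterization_general (u v : ℕ) (hu : 0 < u)
    (q : ℚ) (hq : 0 < q) :
    (¬ ∃ w : ℚ, 0 < w ∧ (q = w / (u * w + 1) ∨ q = w + v)) ↔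
      (1 / (u : ℚ) ≤ q ∧ q ≤ v) := by
  have hu' : (0 : ℚ) < u := by exact_mod_cast hu
  simp only [and_or_left, exists_or, exists_pos_eq_div_mul_add_one_iff hu'.le,
    exists_pos_eq_add_iff, div_le_iff₀ hu', hq, true_and, not_or, not_lt, mul_comm q]

theorem orphan_characterization (u v : ℕ) (hu : 0 < u) (hv : 0 < v)
    (q : ℚ) (hq : 0 < q) :
    (¬ ∃ w : ℚ, 0 < w ∧ (q = w / (u * w + 1) ∨ q = w + v)) ↔
      (1 / (u : ℚ) ≤ q ∧ q ≤ v) :=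
  orphan_characterization_general u v hu q hq
end

section
/- Let w be a positive rational and let α = w/(uw+1) + kv and β = (w+v)/(ku(w+v)+1) for some nonnegative integer k (these are the k-th right descendant of the left child of w and the k-th left descendant of the right child of w, respectively, i.e., adjacent siblings in a row). Then β = (v·{α} + v²(1 − u·{α})) / (u·⌊α⌋·({α} + v(1 − u·{α})) + v(1 − u·{α})), where ⌊α⌋ and {α} denote the integer and fractional parts of α. -/
/-! With `f = w / (u w + 1)` one has `1 - u f = 1 / (u w + 1)`, so numerator and denominator of the
right-hand side are `v (w + v) / (u w + 1)` and `v (k u (w + v) + 1) / (u w + 1)`; cancelling gives `β`.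
Since `0 ≤ f < 1` for `u ≥ 1`, `f` is the fractional part and `k v` the integer part of `α = f + k v`. -/

section LinearOrderedField

variable {K : Type*} [Field K] [LinearOrder K] [IsStrictOrderedRing K]

lemma div_mul_add_one_mem_Ico {u w : K} (hu : 1 ≤ u) (hw : 0 ≤ w) :
    w / (u * w + 1) ∈ Set.Ico 0 1 := by
  have hden : 0 < u * w + 1 := by positivity
  refine ⟨by positivity, (div_lt_one hden).2 ?_⟩
  nlinarith

variable [FloorRing K]

lemma fract_add_natCast_of_mem_Ico {x : K} (hx : x ∈ Set.Ico 0 1) (n : ℕ) :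
    Int.fract (x + n) = x := by
  rw [Int.fract_add_natCast, Int.fract_eq_self.2 hx]

lemma floor_add_natCast_of_mem_Ico {x : K} (hx : x ∈ Set.Ico 0 1) (n : ℕ) :
    ⌊x + n⌋ = n := by
  rw [Int.floor_add_natCast, Int.floor_eq_zero_iff.2 hx, zero_add]

end LinearOrderedField

section Field

variable {K : Type*} [Field K]

/-- The right-hand side of the successor formula, with `a = ⌊α⌋` and `f = {α}`. -/
def successorFormula (u v a f : K) : K :=
  (v * f + v ^ 2 * (1 - u * f)) / (u * a * (f + v * (1 - u * f)) + v * (1 - u * f))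

lemma successorFormula_div_mul_add_one {u v w : K} (hden : u * w + 1 ≠ 0) (hv : v ≠ 0) (n : K) :
    successorFormula u v (n * v) (w / (u * w + 1)) = (w + v) / (n * u * (w + v) + 1) := by
  have hf : 1 - u * (w / (u * w + 1)) = 1 / (u * w + 1) := by
    field_simp; ring
  have hnum : v * (w / (u * w + 1)) + v ^ 2 * (1 - u * (w / (u * w + 1))) =
      v * (w + v) / (u * w + 1) := by
    rw [hf]; field_simp
  have hdenom : u * (n * v) * (w / (u * w + 1) + v * (1 - u * (w / (u * w + 1)))) +
      v * (1 - u * (w / (u * w + 1))) = v * (n * u * (w + v) + 1) / (u * w + 1) := by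
    rw [hf]; field_simp
  rw [successorFormula, hnum, hdenom, div_div_div_cancel_right₀ hden, mul_div_mul_left _ _ hv]

end Field

theorem generalized_successor_formula (u v : ℕ) (hu : 0 < u) (hv : 0 < v)
    (w : ℚ) (hw : 0 < w) (k : ℕ) (α β : ℚ)
    (hα : α = w / (u * w + 1) + k * v)
    (hβ : β = (w + v) / (k * u * (w + v) + 1)) :
    β = ((v : ℚ) * Int.fract α + (v : ℚ) ^ 2 * (1 - u * Int.fract α)) /
        ((u : ℚ) * (⌊α⌋ : ℚ) * (Int.fract α + v * (1 - u * Int.fract α)) +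
          v * (1 - u * Int.fract α)) := by
  have hmem : w / (u * w + 1) ∈ Set.Ico 0 1 :=
    div_mul_add_one_mem_Ico (by exact_mod_cast hu) hw.le
  have hα' : α = w / (u * w + 1) + ((k * v : ℕ) : ℚ) := by rw [hα]; push_cast; rfl
  have hfract : Int.fract α = w / (u * w + 1) := by
    rw [hα', fract_add_natCast_of_mem_Ico hmem]
  have hfloor : (⌊α⌋ : ℚ) = k * v := by
    rw [hα', floor_add_natCast_of_mem_Ico hmem]; push_cast; rfl
  rw [hβ, hfract, hfloor]
  exact (successorFormula_div_mul_add_one (by positivity) (by exact_mod_cast hv.ne') _).symm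
end

section
/- In the original Calkin-Wilf tree (u=v=1), if α_i and α_{i+1} are consecutive entries in a row, then α_{i+1} = 1/(2⌊α_i⌋ + 1 − α_i). -/
/-! Since `w / (w + 1)` lies in `[0, 1)`, the floor of `α = w / (w + 1) + k` is `k`, and then
`2k + 1 - α = (k (w + 1) + 1) / (w + 1)` is the reciprocal of `β`. -/

theorem Int.floor_div_add_one_add_natCast {K : Type*} [Field K] [LinearOrder K]
    [IsStrictOrderedRing K] [FloorRing K] {w : K} (hw : 0 ≤ w) (k : ℕ) :
    ⌊w / (w + 1) + k⌋ = k := by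
  have hw1 : 0 < w + 1 := by linarith
  rw [Int.floor_add_natCast, Int.floor_eq_zero_iff.mpr, zero_add]
  exact ⟨by positivity, (div_lt_one hw1).mpr (lt_add_one w)⟩

theorem newman_successor_formula (w : ℚ) (hw : 0 < w) (k : ℕ) (α β : ℚ)
    (hα : α = w / (w + 1) + k)
    (hβ : β = (w + 1) / (k * (w + 1) + 1)) :
    β = 1 / (2 * (⌊α⌋ : ℚ) + 1 - α) := by
  have hw1 : w + 1 ≠ 0 := by positivity
  have hden : 2 * (k : ℚ) + 1 - α = (k * (w + 1) + 1) / (w + 1) := by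
    rw [hα]; field_simp; ring
  rw [hα, Int.floor_div_add_one_add_natCast hw.le, Int.cast_natCast, ← hα, hden, one_div_div, hβ]
end

section
/- Let w = w'/w'' be a positive rational in lowest terms with w', w'' positive integers, and k a nonnegative integer. Let α = (w' + kv(uw' + w''))/(uw' + w'') and β = (w' + vw'')/(ku(w' + vw'') + w''). Then these fractions are in lowest terms, and letting d be the denominator of α and n the numerator of β, one has v·d + (1 − uv)·w' = n. -/
theorem denominator_numerator_relation (u v : ℕ) (hu : 0 < u) (hv : 0 < v)
    (w' w'' : ℕ) (h1 : 0 < w') (h2 : 0 < w'') (hcop : Nat.Coprime w' w'') (k : ℕ) :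
    Nat.Coprime (w' + k * v * (u * w' + w'')) (u * w' + w'') ∧
    Nat.Coprime (w' + v * w'') (k * u * (w' + v * w'') + w'') ∧
    (v : ℤ) * (u * w' + w'') + (1 - u * v) * w' = w' + v * w'' := by
  have hA : Nat.Coprime w' (u * w' + w'') := by
    have := (Nat.coprime_add_mul_right_right w' w'' u).mpr hcop
    simpa [mul_comm, add_comm] using this
  have hB : Nat.Coprime (w' + v * w'') w'' := by
    have := (Nat.coprime_add_mul_right_left w' w'' v).mpr (by
      simpa [mul_comm] using hcop)
    simpa [mul_comm] using this
  refine ⟨?_, ?_, by ring⟩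
  · exact (Nat.coprime_add_mul_right_left w' (u * w' + w'') (k * v)).mpr hA
  · have := (Nat.coprime_add_mul_right_right (w' + v * w'') w'' (k * u)).mpr hB
    simpa [add_comm] using this
end

section
/- General symmetry formula: for every n ≥ 0 and 1 ≤ i ≤ 2^n, if the i-th vertex in row n of the (u,v)-Calkin-Wilf tree rooted at z equals (az+b)/(cz+d) (with a,b,c,d the nonnegative integers arising from the corresponding word in L_u, R_v), then the (2^n+1−i)-th vertex in row n equals (dz + cv/u)/((bu/v)z + a). -/
/-- The matrix `L_u`. -/
def Lmat (u : ℕ) : Matrix (Fin 2) (Fin 2) ℕ := !![1, 0; u, 1]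

/-- The matrix `R_v`. -/
def Rmat (v : ℕ) : Matrix (Fin 2) (Fin 2) ℕ := !![1, v; 0, 1]

/-- The word in `L_u`, `R_v` corresponding to the 0-indexed position `j` in row `n`
(bits of `j`, least significant = last move, `0 ↦ L`, `1 ↦ R`). -/
def cwWord (u v : ℕ) : ℕ → ℕ → Matrix (Fin 2) (Fin 2) ℕ
  | 0, _ => 1
  | n + 1, j => (if j % 2 = 0 then Lmat u else Rmat v) * cwWord u v n (j / 2)

/-- A matrix acting as a linear fractional transformation on `ℚ`. -/
def lft (M : Matrix (Fin 2) (Fin 2) ℕ) (z : ℚ) : ℚ :=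
  ((M 0 0 : ℚ) * z + (M 0 1 : ℚ)) / ((M 1 0 : ℚ) * z + (M 1 1 : ℚ))

/-- `cw u v z n i` is the `i`-th vertex (1-indexed) of row `n` of the
(u,v)-Calkin-Wilf tree rooted at `z`. -/
def cw (u v : ℕ) (z : ℚ) (n i : ℕ) : ℚ := lft (cwWord u v n (i - 1)) z

/-- The rational version of `cwWord`. -/
def cwWordQ (u v n j : ℕ) : Matrix (Fin 2) (Fin 2) ℚ :=
  (cwWord u v n j).map (Nat.cast)

/-- The conjugating matrix. -/
def Kmat (u v : ℕ) : Matrix (Fin 2) (Fin 2) ℚ := !![0, (v : ℚ); (u : ℚ), 0]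

lemma cwWordQ_succ (u v n j : ℕ) :
    cwWordQ u v (n + 1) j =
      (if j % 2 = 0 then (Lmat u).map (Nat.cast) else (Rmat v).map (Nat.cast)) *
        cwWordQ u v n (j / 2) := by
  unfold cwWordQ
  rw [show cwWord u v (n+1) j = (if j % 2 = 0 then Lmat u else Rmat v) * cwWord u v n (j / 2)
    from rfl]
  split <;> exact Matrix.map_mul (f := Nat.castRingHom ℚ)

lemma LmatQ (u : ℕ) : (Lmat u).map ((Nat.cast) : ℕ → ℚ) = !![1, 0; (u:ℚ), 1] := by
  ext i j; fin_cases i <;> fin_cases j <;> simp [Lmat, Matrix.map_apply]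

lemma RmatQ (v : ℕ) : (Rmat v).map ((Nat.cast) : ℕ → ℚ) = !![1, (v:ℚ); 0, 1] := by
  ext i j; fin_cases i <;> fin_cases j <;> simp [Rmat, Matrix.map_apply]

lemma key (u v : ℕ) : ∀ n j k, j + k + 1 = 2 ^ n →
    cwWordQ u v n k * Kmat u v = Kmat u v * cwWordQ u v n j := by
  intro n
  induction n with
  | zero =>
    intro j k h
    have hj : j = 0 := by omega
    have hk : k = 0 := by omega
    subst hj hk
    show ((1 : Matrix (Fin 2) (Fin 2) ℕ)).map _ * _ = _ * ((1 : Matrix (Fin 2) (Fin 2) ℕ)).map _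
    rw [Matrix.map_one _ (by simp) (by simp)]
    rw [one_mul, mul_one]
  | succ n ih =>
    intro j k h
    have hpar : k % 2 = 1 - j % 2 := by omega
    have hdiv : j / 2 + k / 2 + 1 = 2 ^ n := by omega
    have ih' := ih (j / 2) (k / 2) hdiv
    rw [cwWordQ_succ, cwWordQ_succ]
    rcases Nat.mod_two_eq_zero_or_one j with hj | hj
    · have hk2 : k % 2 = 1 := by omega
      rw [hj, hk2, if_pos rfl, if_neg one_ne_zero, LmatQ, RmatQ,
        mul_assoc, ih', ← mul_assoc, ← mul_assoc]
      congr 1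
      ext i j
      fin_cases i <;> fin_cases j <;>
        simp [Kmat, Matrix.mul_apply, Fin.sum_univ_two] <;> ring
    · have hk2 : k % 2 = 0 := by omega
      rw [hj, hk2, if_pos rfl, if_neg one_ne_zero, LmatQ, RmatQ,
        mul_assoc, ih', ← mul_assoc, ← mul_assoc]
      congr 1
      ext i j
      fin_cases i <;> fin_cases j <;>
        simp [Kmat, Matrix.mul_apply, Fin.sum_univ_two] <;> ring

theorem general_symmetry_formula (u v : ℕ) (hu : 0 < u) (hv : 0 < v)
    (z : ℚ) (hz : 0 < z) (n i : ℕ) (h1 : 1 ≤ i) (h2 : i ≤ 2 ^ n)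
    (a b c d : ℕ)
    (ha : a = cwWord u v n (i - 1) 0 0) (hb : b = cwWord u v n (i - 1) 0 1)
    (hc : c = cwWord u v n (i - 1) 1 0) (hd : d = cwWord u v n (i - 1) 1 1) :
    cw u v z n (2 ^ n + 1 - i) =
      ((d : ℚ) * z + (c : ℚ) * v / u) / ((b : ℚ) * u / v * z + (a : ℚ)) := by
  have hk := key u v n (i - 1) (2 ^ n - i) (by omega)
  have hidx : 2 ^ n + 1 - i - 1 = 2 ^ n - i := by omega
  set W := cwWord u v n (i - 1) with hW
  set W' := cwWord u v n (2 ^ n - i) with hW'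
  have huq : (u : ℚ) ≠ 0 := Nat.cast_ne_zero.mpr hu.ne'
  have hvq : (v : ℚ) ≠ 0 := Nat.cast_ne_zero.mpr hv.ne'
  -- extract entry equations
  have e00 := congrFun (congrFun hk 0) 0
  have e01 := congrFun (congrFun hk 0) 1
  have e10 := congrFun (congrFun hk 1) 0
  have e11 := congrFun (congrFun hk 1) 1
  simp [cwWordQ, Kmat, Matrix.mul_apply, Fin.sum_univ_two, Matrix.map_apply, ← hW, ← hW']
    at e00 e01 e10 e11
  -- e00 : W'01 * u = v * W10 ; e01 : W'00 * v = v * W11 ;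
  -- e10 : W'11 * u = u * W00 ; e11 : W'10 * v = u * W01
  have ha' : ((W' 0 0 : ℕ) : ℚ) = (d : ℚ) := by
    have := mul_right_cancel₀ hvq (e01.trans (mul_comm (v:ℚ) _))
    rw [this, hd]
  have hd' : ((W' 1 1 : ℕ) : ℚ) = (a : ℚ) := by
    have := mul_right_cancel₀ huq (e10.trans (mul_comm (u:ℚ) _))
    rw [this, ha]
  have hb' : ((W' 0 1 : ℕ) : ℚ) = (c : ℚ) * v / u := by
    rw [hc]; field_simp; linarith [e00]
  have hc' : ((W' 1 0 : ℕ) : ℚ) = (b : ℚ) * u / v := by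
    rw [hb]; field_simp; linarith [e11]
  show lft (cwWord u v n (2 ^ n + 1 - i - 1)) z = _
  rw [hidx, ← hW', lft, ha', hb', hc', hd']
end

section
/- Skew symmetry: for every n ≥ 0 and 1 ≤ i ≤ 2^n, c_z^{(u,v)}(n,i) · c_{(v/u)z^{-1}}^{(u,v)}(n, 2^n+1−i) = v/u. -/
lemma cwWord_pos (u v : ℕ) (z : ℚ) (hz : 0 < z) (n j : ℕ) :
    0 < (cwWord u v n j 0 0 : ℚ) * z + (cwWord u v n j 0 1 : ℚ) ∧
    0 < (cwWord u v n j 1 0 : ℚ) * z + (cwWord u v n j 1 1 : ℚ) := by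
  induction n generalizing j with
  | zero =>
    simp [cwWord, Matrix.one_apply]
    exact hz
  | succ n ih =>
    obtain ⟨h1, h2⟩ := ih (j / 2)
    rcases Nat.mod_two_eq_zero_or_one j with h | h <;>
      simp only [cwWord, h, if_pos, if_neg, Nat.one_ne_zero, not_false_iff, reduceIte] <;>
      simp [Matrix.mul_apply, Fin.sum_univ_two, Lmat, Rmat] <;>
      constructor <;>
      nlinarith [h1, h2, (Nat.cast_nonneg u : (0:ℚ) ≤ u), (Nat.cast_nonneg v : (0:ℚ) ≤ v)]

lemma lft_Lmul (u v : ℕ) (N : Matrix (Fin 2) (Fin 2) ℕ) (z : ℚ) :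
    lft (Lmat u * N) z =
      ((N 0 0 : ℚ) * z + N 0 1) /
        ((u : ℚ) * ((N 0 0 : ℚ) * z + N 0 1) + ((N 1 0 : ℚ) * z + N 1 1)) := by
  simp [lft, Lmat, Matrix.mul_apply, Fin.sum_univ_two]
  congr 1 <;> ring

lemma lft_Rmul (u v : ℕ) (N : Matrix (Fin 2) (Fin 2) ℕ) (z : ℚ) :
    lft (Rmat v * N) z =
      (((N 0 0 : ℚ) * z + N 0 1) + (v : ℚ) * ((N 1 0 : ℚ) * z + N 1 1)) /
        ((N 1 0 : ℚ) * z + N 1 1) := by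
  simp [lft, Rmat, Matrix.mul_apply, Fin.sum_univ_two]
  congr 1 <;> ring

lemma stepL (u v a b c d : ℚ) (hu : 0 < u) (hv : 0 < v) (ha : 0 < a) (hb : 0 < b)
    (hc : 0 < c) (hd : 0 < d) (H : a / b * (c / d) = v / u) :
    a / (u * a + b) * ((c + v * d) / d) = v / u := by
  have h1 : u * a + b ≠ 0 := by positivity
  field_simp at H ⊢
  linear_combination H

lemma stepR (u v a b c d : ℚ) (hu : 0 < u) (hv : 0 < v) (ha : 0 < a) (hb : 0 < b)
    (hc : 0 < c) (hd : 0 < d) (H : a / b * (c / d) = v / u) :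
    (a + v * b) / b * (c / (u * c + d)) = v / u := by
  have h1 : u * c + d ≠ 0 := by positivity
  field_simp at H ⊢
  linear_combination H

lemma skew_key (u v : ℕ) (hu : 0 < u) (hv : 0 < v) :
    ∀ n j, j < 2 ^ n → ∀ z : ℚ, 0 < z →
      lft (cwWord u v n j) z * lft (cwWord u v n (2 ^ n - 1 - j)) ((v : ℚ) / u * z⁻¹) =
        (v : ℚ) / u := by
  have huQ : (0:ℚ) < u := by exact_mod_cast hu
  have hvQ : (0:ℚ) < v := by exact_mod_cast hv
  intro n
  induction n with
  | zero =>
    intro j hj z hz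
    interval_cases j
    simp only [cwWord, lft, Matrix.one_apply]
    norm_num
    field_simp
  | succ n ih =>
    intro j hj z hz
    have h2n : 2 ^ (n + 1) = 2 * 2 ^ n := by ring
    have hj2lt : j / 2 < 2 ^ n := by omega
    have hz' : 0 < (v : ℚ) / u * z⁻¹ := by positivity
    have H := ih (j / 2) hj2lt z hz
    obtain ⟨hn1, hd1⟩ := cwWord_pos u v z hz n (j / 2)
    obtain ⟨hn2, hd2⟩ := cwWord_pos u v _ hz' n (2 ^ n - 1 - j / 2)
    have hcomp : (2 ^ (n + 1) - 1 - j) / 2 = 2 ^ n - 1 - j / 2 := by omega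
    have H' : ((cwWord u v n (j/2) 0 0 : ℚ) * z + cwWord u v n (j/2) 0 1) /
        ((cwWord u v n (j/2) 1 0 : ℚ) * z + cwWord u v n (j/2) 1 1) *
        (((cwWord u v n (2^n-1-j/2) 0 0 : ℚ) * ((v:ℚ)/u*z⁻¹) + cwWord u v n (2^n-1-j/2) 0 1) /
         ((cwWord u v n (2^n-1-j/2) 1 0 : ℚ) * ((v:ℚ)/u*z⁻¹) + cwWord u v n (2^n-1-j/2) 1 1)) =
        (v:ℚ)/u := H
    rcases Nat.mod_two_eq_zero_or_one j with h | h
    · have hcpar : (2 ^ (n + 1) - 1 - j) % 2 = 1 := by omega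
      simp only [cwWord, h, hcpar, reduceIte, hcomp, Nat.one_ne_zero]
      rw [lft_Lmul u v, lft_Rmul u v]
      exact stepL _ _ _ _ _ _ huQ hvQ hn1 hd1 hn2 hd2 H'
    · have hcpar : (2 ^ (n + 1) - 1 - j) % 2 = 0 := by omega
      simp only [cwWord, h, hcpar, reduceIte, hcomp, Nat.one_ne_zero]
      rw [lft_Rmul u v, lft_Lmul u v]
      exact stepR _ _ _ _ _ _ huQ hvQ hn1 hd1 hn2 hd2 H'

theorem skew_symmetry (u v : ℕ) (hu : 0 < u) (hv : 0 < v)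
    (z : ℚ) (hz : 0 < z) (n i : ℕ) (h1 : 1 ≤ i) (h2 : i ≤ 2 ^ n) :
    cw u v z n i * cw u v ((v : ℚ) / u * z⁻¹) n (2 ^ n + 1 - i) = (v : ℚ) / u := by
  have h3 : 2 ^ n + 1 - i - 1 = 2 ^ n - 1 - (i - 1) := by omega
  have h4 : i - 1 < 2 ^ n := by omega
  simpa [cw, h3] using skew_key u v hu hv n (i - 1) h4 z hz
end

section
/- Nathanson's symmetry: for all positive integers u, v, every n ≥ 0 and 1 ≤ i ≤ 2^n, c_z^{(u,v)}(n,i) · c_{z^{-1}}^{(v,u)}(n, 2^n+1−i) = 1. -/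
/-- Conjugation by the antidiagonal permutation matrix. -/
def revConj : Matrix (Fin 2) (Fin 2) ℕ ≃ₐ[ℕ] Matrix (Fin 2) (Fin 2) ℕ :=
  Matrix.reindexAlgEquiv ℕ ℕ Fin.revPerm

lemma revConj_eq (M : Matrix (Fin 2) (Fin 2) ℕ) :
    revConj M = !![M 1 1, M 1 0; M 0 1, M 0 0] := by
  ext i j
  fin_cases i <;> fin_cases j <;> rfl

lemma revConj_Lmat (u : ℕ) : revConj (Lmat u) = Rmat u := by
  simp [revConj_eq, Lmat, Rmat]

lemma revConj_Rmat (v : ℕ) : revConj (Rmat v) = Lmat v := by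
  simp [revConj_eq, Lmat, Rmat]

lemma cwWord_reverse (u v n j : ℕ) (hj : j < 2 ^ n) :
    cwWord v u n (2 ^ n - 1 - j) = revConj (cwWord u v n j) := by
  induction n generalizing j with
  | zero => simp [cwWord]
  | succ n ih =>
    have hdiv : (2 ^ (n + 1) - 1 - j) / 2 = 2 ^ n - 1 - j / 2 := by omega
    have hmod : (2 ^ (n + 1) - 1 - j) % 2 = 1 - j % 2 := by omega
    rw [cwWord, cwWord, map_mul, hdiv, hmod, ih (j / 2) (by omega)]
    rcases Nat.mod_two_eq_zero_or_one j with h | h <;> simp [h, revConj_Lmat, revConj_Rmat]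

def posDiagSubmonoid (ι : Type*) [Fintype ι] [DecidableEq ι] : Submonoid (Matrix ι ι ℕ) where
  carrier := {M | ∀ i, 0 < M i i}
  one_mem' i := by simp
  mul_mem' {A B} hA hB i := by
    rw [Matrix.mul_apply]
    exact lt_of_lt_of_le (Nat.mul_pos (hA i) (hB i))
      (Finset.single_le_sum (f := fun j => A i j * B j i) (fun _ _ => Nat.zero_le _)
        (Finset.mem_univ i))

lemma cwWord_mem_posDiagSubmonoid (u v n j : ℕ) : cwWord u v n j ∈ posDiagSubmonoid (Fin 2) := by
  induction n generalizing j with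
  | zero => exact one_mem _
  | succ n ih =>
    refine mul_mem ?_ (ih _)
    split_ifs <;> intro i <;> fin_cases i <;> simp [Lmat, Rmat]

lemma lft_mul_lft_revConj_inv {M : Matrix (Fin 2) (Fin 2) ℕ} (hM : M ∈ posDiagSubmonoid (Fin 2))
    {z : ℚ} (hz : 0 < z) : lft M z * lft (revConj M) z⁻¹ = 1 := by
  have ha : (0 : ℚ) < M 0 0 := by exact_mod_cast hM 0
  have hd : (0 : ℚ) < M 1 1 := by exact_mod_cast hM 1
  have hnum : (M 0 0 : ℚ) * z + M 0 1 ≠ 0 := by positivity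
  have hden : (M 1 0 : ℚ) * z + M 1 1 ≠ 0 := by positivity
  have hflip : lft (revConj M) z⁻¹ = (M 1 0 * z + M 1 1) / (M 0 0 * z + M 0 1) := by
    simp only [lft, revConj_eq, Matrix.of_apply, Matrix.cons_val', Matrix.cons_val_zero,
      Matrix.cons_val_one, Matrix.empty_val', Matrix.cons_val_fin_one]
    field_simp
    ring
  rw [lft, hflip, div_mul_div_comm, mul_comm, div_self (mul_ne_zero hden hnum)]

theorem nathanson_symmetry_general (u v : ℕ)
    (z : ℚ) (hz : 0 < z) (n i : ℕ) (h1 : 1 ≤ i) (h2 : i ≤ 2 ^ n) :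
    cw u v z n i * cw v u z⁻¹ n (2 ^ n + 1 - i) = 1 := by
  have hidx : 2 ^ n + 1 - i - 1 = 2 ^ n - 1 - (i - 1) := by omega
  rw [cw, cw, hidx, cwWord_reverse u v n (i - 1) (by omega)]
  exact lft_mul_lft_revConj_inv (cwWord_mem_posDiagSubmonoid u v n (i - 1)) hz

theorem nathanson_symmetry (u v : ℕ) (hu : 0 < u) (hv : 0 < v)
    (z : ℚ) (hz : 0 < z) (n i : ℕ) (h1 : 1 ≤ i) (h2 : i ≤ 2 ^ n) :
    cw u v z n i * cw v u z⁻¹ n (2 ^ n + 1 - i) = 1 :=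
  nathanson_symmetry_general u v z hz n i h1 h2
end

section
/- The symmetry formula c_z^{(u,v)}(n,i) · c_z^{(u,v)}(n, 2^n+1−i) = 1 holds for all n ≥ 0 and 1 ≤ i ≤ 2^n if and only if u = v and z = 1. -/
/-!
Conjugating by the swap matrix `!![0, 1; 1, 0]` exchanges `L_u` and `R_u`. When `u = v`, the
position `2^n - 1 - j` is `j` with every bit flipped, so its word is the conjugate of the word of
`j`. At `z = 1` a matrix acts as (sum of first row) / (sum of second row) and its conjugate as the
reciprocal; both sums are positive because the words have positive diagonal. Conversely, row `0`
forces `z² = 1` and row `1` forces `(1 + v) / (u + 1) = 1`.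
-/

def swapConj (M : Matrix (Fin 2) (Fin 2) ℕ) : Matrix (Fin 2) (Fin 2) ℕ :=
  !![M 1 1, M 1 0; M 0 1, M 0 0]

lemma swapConj_one : swapConj 1 = 1 := by
  ext i j
  fin_cases i <;> fin_cases j <;> rfl

lemma swapConj_mul (M N : Matrix (Fin 2) (Fin 2) ℕ) :
    swapConj (M * N) = swapConj M * swapConj N := by
  ext i j
  fin_cases i <;> fin_cases j <;>
    simp [swapConj, Matrix.mul_apply, Fin.sum_univ_two, add_comm]

lemma swapConj_Lmat (u : ℕ) : swapConj (Lmat u) = Rmat u := by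
  ext i j
  fin_cases i <;> fin_cases j <;> rfl

lemma swapConj_Rmat (v : ℕ) : swapConj (Rmat v) = Lmat v := by
  ext i j
  fin_cases i <;> fin_cases j <;> rfl

lemma cwWord_succ (u v n j : ℕ) :
    cwWord u v (n + 1) j = (if j % 2 = 0 then Lmat u else Rmat v) * cwWord u v n (j / 2) :=
  rfl

lemma cwWord_complement (u : ℕ) :
    ∀ n j, j < 2 ^ n → cwWord u u n (2 ^ n - 1 - j) = swapConj (cwWord u u n j)
  | 0, _, _ => swapConj_one.symm
  | n + 1, j, hj => by
    have hpow : 2 ^ (n + 1) = 2 * 2 ^ n := by ring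
    rw [hpow] at hj ⊢
    have hhalf : (2 * 2 ^ n - 1 - j) / 2 = 2 ^ n - 1 - j / 2 := by omega
    have hbit : (2 * 2 ^ n - 1 - j) % 2 = 0 ↔ ¬ j % 2 = 0 := by omega
    rw [cwWord_succ, cwWord_succ, hhalf, cwWord_complement u n (j / 2) (by omega),
      swapConj_mul]
    by_cases hj2 : j % 2 = 0 <;> simp [hj2, hbit, swapConj_Lmat, swapConj_Rmat]

lemma one_le_diag_mul {M N : Matrix (Fin 2) (Fin 2) ℕ}
    (hM : ∀ k, 1 ≤ M k k) (hN : ∀ k, 1 ≤ N k k) (k : Fin 2) : 1 ≤ (M * N) k k := by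
  rw [Matrix.mul_apply]
  calc 1 ≤ M k k * N k k := Nat.mul_le_mul (hM k) (hN k)
    _ ≤ ∑ l, M k l * N l k :=
      Finset.single_le_sum (f := fun l => M k l * N l k) (fun _ _ => Nat.zero_le _)
        (Finset.mem_univ k)

lemma one_le_cwWord_diag (u v : ℕ) : ∀ n j k, 1 ≤ cwWord u v n j k k
  | 0, _, k => by fin_cases k <;> simp [cwWord]
  | n + 1, j, k => by
    rw [cwWord_succ]
    refine one_le_diag_mul (fun k => ?_) (one_le_cwWord_diag u v n (j / 2)) k
    split_ifs <;> fin_cases k <;> simp [Lmat, Rmat]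

lemma lft_one (M : Matrix (Fin 2) (Fin 2) ℕ) :
    lft M 1 = ((M 0 0 + M 0 1 : ℕ) : ℚ) / ((M 1 0 + M 1 1 : ℕ) : ℚ) := by
  simp [lft]

lemma lft_swapConj_one (M : Matrix (Fin 2) (Fin 2) ℕ) : lft (swapConj M) 1 = (lft M 1)⁻¹ := by
  simp only [lft_one, inv_div, swapConj, Matrix.of_apply, Matrix.cons_val', Matrix.cons_val_zero,
    Matrix.cons_val_one, Matrix.empty_val', Matrix.cons_val_fin_one, add_comm]

lemma lft_cwWord_one_ne_zero (u v n j : ℕ) : lft (cwWord u v n j) 1 ≠ 0 := by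
  have h0 := one_le_cwWord_diag u v n j 0
  have h1 := one_le_cwWord_diag u v n j 1
  rw [lft_one]
  exact div_ne_zero (by positivity) (by positivity)

lemma cw_mul_cw_complement (u n i : ℕ) (hi : 1 ≤ i) (hin : i ≤ 2 ^ n) :
    cw u u 1 n i * cw u u 1 n (2 ^ n + 1 - i) = 1 := by
  have hidx : 2 ^ n + 1 - i - 1 = 2 ^ n - 1 - (i - 1) := by omega
  rw [cw, cw, hidx, cwWord_complement u n (i - 1) (by omega), lft_swapConj_one]
  exact mul_inv_cancel₀ (lft_cwWord_one_ne_zero u u n (i - 1))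

lemma cw_zero (u v : ℕ) (z : ℚ) (i : ℕ) : cw u v z 0 i = z := by
  simp [cw, cwWord, lft]

lemma cw_one_one (u v : ℕ) (z : ℚ) : cw u v z 1 1 = z / (u * z + 1) := by
  simp [cw, cwWord, lft, Lmat]

lemma cw_one_two (u v : ℕ) (z : ℚ) : cw u v z 1 2 = z + v := by
  simp [cw, cwWord, lft, Rmat]

theorem symmetry_formula_iff_general (u v : ℕ)
    (z : ℚ) (hz : 0 < z) :
    (∀ n i : ℕ, 1 ≤ i → i ≤ 2 ^ n →
        cw u v z n i * cw u v z n (2 ^ n + 1 - i) = 1) ↔ (u = v ∧ z = 1) := by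
  constructor
  · intro h
    have hz1 : z = 1 := by
      have hzz : z * z = 1 := by simpa [cw_zero] using h 0 1 le_rfl le_rfl
      nlinarith
    subst hz1
    have huv : (1 : ℚ) / (u + 1) * (1 + v) = 1 := by
      simpa [cw_one_one, cw_one_two] using h 1 1 le_rfl (by norm_num)
    field_simp at huv
    exact ⟨by exact_mod_cast (by linarith : (u : ℚ) = v), rfl⟩
  · rintro ⟨rfl, rfl⟩
    exact cw_mul_cw_complement u

theorem symmetry_formula_iff (u v : ℕ) (hu : 0 < u) (hv : 0 < v)
    (z : ℚ) (hz : 0 < z) :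
    (∀ n i : ℕ, 1 ≤ i → i ≤ 2 ^ n →
        cw u v z n i * cw u v z n (2 ^ n + 1 - i) = 1) ↔ (u = v ∧ z = 1) :=
  symmetry_formula_iff_general u v z hz
end

section
/- In the original Calkin-Wilf tree rooted at 1, if a/b is a reduced positive rational with continued fraction representation [a_0, a_1, ..., a_k] (with a_k ≠ 1 when a/b ≠ 1), then a/b appears in the tree at depth a_0 + a_1 + ... + a_k − 1. -/
/-- The value of a finite continued fraction `[q₀, q₁, …, q_r]`. -/
def cfVal : List ℕ → ℚ
  | [] => 0
  | q :: l => (q : ℚ) + (cfVal l)⁻¹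

/-- Row `n` of the Calkin-Wilf tree rooted at `1`. -/
def cwRow : ℕ → List ℚ
  | 0 => [1]
  | n + 1 => (cwRow n).flatMap fun w => [w / (w + 1), w + 1]

/-!
Each row of the Calkin-Wilf tree is closed under `x ↦ x⁻¹`, since inversion swaps the two
children `w / (w + 1)` and `w + 1` of `w` with the children `w⁻¹ + 1` and `w⁻¹ / (w⁻¹ + 1)`
of `w⁻¹`. Passing to the right child `x ↦ x + 1` descends one row, so
`[a₀, a₁, …, a_k] = a₀ + [a₁, …, a_k]⁻¹` lies `a₀` rows below `[a₁, …, a_k]`, and induction on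
`k` gives the depth `a₀ + ⋯ + a_k - 1`.
-/

lemma mem_cwRow_succ {x : ℚ} {n : ℕ} :
    x ∈ cwRow (n + 1) ↔ ∃ w ∈ cwRow n, x = w / (w + 1) ∨ x = w + 1 := by
  simp only [cwRow, List.mem_flatMap, List.mem_cons, List.not_mem_nil, or_false]

lemma pos_of_mem_cwRow {x : ℚ} : ∀ {n : ℕ}, x ∈ cwRow n → 0 < x
  | 0, h => by simp_all [cwRow]
  | n + 1, h => by
    obtain ⟨w, hw, rfl | rfl⟩ := mem_cwRow_succ.1 h <;>
    · have := pos_of_mem_cwRow hw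
      positivity

lemma add_one_mem_cwRow_succ {x : ℚ} {n : ℕ} (h : x ∈ cwRow n) : x + 1 ∈ cwRow (n + 1) :=
  mem_cwRow_succ.2 ⟨x, h, Or.inr rfl⟩

lemma add_nat_mem_cwRow {x : ℚ} {n : ℕ} (h : x ∈ cwRow n) : ∀ k : ℕ, x + k ∈ cwRow (n + k)
  | 0 => by simpa using h
  | k + 1 => by
    simpa [← add_assoc] using add_one_mem_cwRow_succ (add_nat_mem_cwRow h k)

lemma inv_mem_cwRow {x : ℚ} : ∀ {n : ℕ}, x ∈ cwRow n → x⁻¹ ∈ cwRow n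
  | 0, h => by simp_all [cwRow]
  | n + 1, h => by
    obtain ⟨w, hw, rfl | rfl⟩ := mem_cwRow_succ.1 h
    all_goals
      have := pos_of_mem_cwRow hw
      refine mem_cwRow_succ.2 ⟨w⁻¹, inv_mem_cwRow hw, ?_⟩
    · right
      field_simp
      ring
    · left
      field_simp
      ring

lemma cfVal_cons_mem_cwRow (q : ℕ) (l : List ℕ) (hl : ∀ x ∈ l, 1 ≤ x) (hq : l = [] → 1 ≤ q) :
    cfVal (q :: l) ∈ cwRow ((q :: l).sum - 1) := by
  induction l generalizing q with
  | nil =>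
    obtain ⟨k, rfl⟩ := Nat.exists_eq_add_of_le' (hq rfl)
    simpa [cfVal, add_comm] using add_nat_mem_cwRow (x := 1) (n := 0) (by simp [cwRow]) k
  | cons r rs ih =>
    have hr : 1 ≤ r := hl r List.mem_cons_self
    have hrs := inv_mem_cwRow (ih r (fun x hx => hl x (List.mem_cons_of_mem r hx)) fun _ => hr)
    have hdepth : (r :: rs).sum - 1 + q = (q :: r :: rs).sum - 1 := by
      simp only [List.sum_cons]
      omega
    rw [← hdepth]
    simpa [cfVal, add_comm] using add_nat_mem_cwRow hrs q

theorem depth_formula_general (a b : ℕ)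
    (qs : List ℕ)
    (htail : ∀ x ∈ qs.tail, 1 ≤ x)
    (hlast : 1 ≤ qs.getLastD 0)
    (hval : cfVal qs = (a : ℚ) / b) :
    (a : ℚ) / b ∈ cwRow (qs.sum - 1) := by
  rw [← hval]
  cases qs with
  | nil => simp at hlast
  | cons q l =>
    refine cfVal_cons_mem_cwRow q l htail ?_
    rintro rfl
    simpa using hlast

theorem depth_formula (a b : ℕ) (ha : 0 < a) (hb : 0 < b) (hcop : Nat.Coprime a b)
    (qs : List ℕ) (hne : qs ≠ [])
    (htail : ∀ x ∈ qs.tail, 1 ≤ x)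
    (hlast : 1 ≤ qs.getLastD 0)
    (hlast2 : (a : ℚ) / b ≠ 1 → 2 ≤ qs.getLastD 0)
    (hval : cfVal qs = (a : ℚ) / b) :
    (a : ℚ) / b ∈ cwRow (qs.sum - 1) :=
  depth_formula_general a b qs htail hlast hval
end

section
/- The vertex set of the (u,v)-Calkin-Wilf tree rooted at z is contained in the vertex set of the (u',v')-Calkin-Wilf tree rooted at z' if and only if z is a vertex of the (u',v')-tree rooted at z', u' divides u, and v' divides v. -/
namespace CWAux

lemma pos {u v : ℕ} {z : ℚ} (hz : 0 < z) {w : ℚ} (h : CWVertex u v z w) : 0 < w := by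
  induction h with
  | root => exact hz
  | @left w h ih =>
    have hu : (0:ℚ) ≤ (u:ℚ) := Nat.cast_nonneg u
    have hd : (0:ℚ) < (u:ℚ) * w + 1 := by nlinarith
    exact div_pos ih hd
  | @right w h ih =>
    have : (0:ℚ) ≤ (v:ℚ) := Nat.cast_nonneg v
    linarith

lemma right_iter {u v : ℕ} {z w : ℚ} (h : CWVertex u v z w) (n : ℕ) :
    CWVertex u v z (w + n * v) := by
  induction n with
  | zero => simpa using h
  | succ n ih =>
    have h2 := ih.right
    have he : w + (n:ℚ) * v + v = w + ((n+1 : ℕ) : ℚ) * v := by push_cast; ring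
    rwa [he] at h2

lemma left_iter {u v : ℕ} {z w : ℚ} (hz : 0 < z) (h : CWVertex u v z w) (n : ℕ) :
    CWVertex u v z (w / (n * u * w + 1)) := by
  have hw : 0 < w := pos hz h
  have hu : (0:ℚ) ≤ (u:ℚ) := Nat.cast_nonneg u
  induction n with
  | zero => simpa using h
  | succ n ih =>
    have hn : (0:ℚ) ≤ (n:ℚ) := Nat.cast_nonneg n
    have hd : (0:ℚ) < (n:ℚ) * u * w + 1 := by nlinarith [mul_nonneg (mul_nonneg hn hu) hw.le]
    have h2 := ih.left
    have key : w / ((n:ℚ) * u * w + 1) / ((u:ℚ) * (w / ((n:ℚ) * u * w + 1)) + 1)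
        = w / (((n+1 : ℕ) : ℚ) * u * w + 1) := by
      rw [div_div]
      congr 1
      push_cast
      field_simp
      ring
    rwa [key] at h2

lemma inv {u v : ℕ} {z w : ℚ} (h : CWVertex u v z w) :
    w = z ∨ (∃ t, CWVertex u v z t ∧ w = t / (u * t + 1)) ∨
      (∃ t, CWVertex u v z t ∧ w = t + v) := by
  cases h with
  | root => exact Or.inl rfl
  | left h => exact Or.inr (Or.inl ⟨_, h, rfl⟩)
  | right h => exact Or.inr (Or.inr ⟨_, h, rfl⟩)


lemma backward {u v u' v' : ℕ} {z z' : ℚ} (hz' : 0 < z')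
    (h1 : CWVertex u' v' z' z) (hdu : u' ∣ u) (hdv : v' ∣ v) :
    ∀ w, CWVertex u v z w → CWVertex u' v' z' w := by
  obtain ⟨a, ha⟩ := hdu
  obtain ⟨b, hb⟩ := hdv
  intro w h
  induction h with
  | root => exact h1
  | @left w h ih =>
    have h2 := left_iter hz' ih a
    have he : w / ((a:ℚ) * u' * w + 1) = w / ((u:ℚ) * w + 1) := by
      rw [ha]; push_cast; ring
    rwa [he] at h2
  | @right w h ih =>
    have h2 := right_iter ih b
    have he : w + (b:ℚ) * v' = w + (v:ℚ) := by rw [hb]; push_cast; ring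
    rwa [he] at h2

lemma descent_v {u' v' : ℕ} {z' : ℚ} (hu' : 0 < u') (hv' : 0 < v') (hz' : 0 < z') :
    ∀ m : ℕ, ∀ w : ℚ, 0 < w → w < 1 → (∀ j : ℕ, j ≤ m → w + (j:ℚ) ≠ z') →
      CWVertex u' v' z' (w + (m:ℚ)) → v' ∣ m := by
  intro m
  induction m using Nat.strong_induction_on with
  | _ m ih =>
    intro w hw0 hw1 hne h
    rcases Nat.eq_zero_or_pos m with hm | hm
    · exact hm ▸ dvd_zero v'
    have hm1 : (1:ℚ) ≤ (m:ℚ) := by exact_mod_cast hm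
    have hu1 : (1:ℚ) ≤ (u':ℚ) := by exact_mod_cast hu'
    have hv1 : (1:ℚ) ≤ (v':ℚ) := by exact_mod_cast hv'
    rcases inv h with h1 | ⟨t, ht, h2⟩ | ⟨t, ht, h3⟩
    · exact absurd h1 (hne m le_rfl)
    · exfalso
      have ht0 : 0 < t := pos hz' ht
      have hd : (0:ℚ) < (u':ℚ) * t + 1 := by nlinarith
      have hlt : t / ((u':ℚ) * t + 1) < 1 := by
        rw [div_lt_one hd]; nlinarith
      linarith [h2, hlt]
    · have ht0 : 0 < t := pos hz' ht
      have hvm : v' ≤ m := by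
        by_contra hc
        push_neg at hc
        have : (m:ℚ) + 1 ≤ (v':ℚ) := by exact_mod_cast hc
        linarith
      have hcast : ((m - v' : ℕ) : ℚ) = (m:ℚ) - (v':ℚ) := Nat.cast_sub hvm
      have ht' : t = w + ((m - v' : ℕ) : ℚ) := by rw [hcast]; linarith
      have hdvd := ih (m - v') (by omega) w hw0 hw1
        (fun j hj => hne j (le_trans hj (Nat.sub_le m v')))
        (ht' ▸ ht)
      have h4 : v' ∣ (m - v') + v' := Nat.dvd_add hdvd dvd_rfl
      rwa [Nat.sub_add_cancel hvm] at h4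

lemma descent_u {u' v' : ℕ} {z' : ℚ} (hu' : 0 < u') (hv' : 0 < v') (hz' : 0 < z') :
    ∀ m : ℕ, ∀ δ : ℚ, 0 < δ → δ < 1 → (∀ j : ℕ, j ≤ m → 1 / ((j:ℚ) + δ) ≠ z') →
      CWVertex u' v' z' (1 / ((m:ℚ) + δ)) → u' ∣ m := by
  intro m
  induction m using Nat.strong_induction_on with
  | _ m ih =>
    intro δ hδ0 hδ1 hne h
    rcases Nat.eq_zero_or_pos m with hm | hm
    · exact hm ▸ dvd_zero u'
    have hm1 : (1:ℚ) ≤ (m:ℚ) := by exact_mod_cast hm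
    have hu1 : (1:ℚ) ≤ (u':ℚ) := by exact_mod_cast hu'
    have hv1 : (1:ℚ) ≤ (v':ℚ) := by exact_mod_cast hv'
    have hs0 : (0:ℚ) < (m:ℚ) + δ := by linarith
    have hs1 : 1 / ((m:ℚ) + δ) < 1 := by
      rw [div_lt_one hs0]; linarith
    have hspos : 0 < 1 / ((m:ℚ) + δ) := by positivity
    rcases inv h with h1 | ⟨t, ht, h2⟩ | ⟨t, ht, h3⟩
    · exact absurd h1 (hne m le_rfl)
    · -- left child
      have ht0 : 0 < t := pos hz' ht
      have hd : (0:ℚ) < (u':ℚ) * t + 1 := by nlinarith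
      have h2' : (u':ℚ) * t + 1 = t * ((m:ℚ) + δ) := by
        field_simp at h2
        linarith [h2]
      have key : t * ((m:ℚ) + δ - u') = 1 := by nlinarith [h2']
      have hpos2 : (0:ℚ) < (m:ℚ) + δ - u' := by nlinarith [key, ht0]
      have hum : u' ≤ m := by
        have hq : (u':ℚ) < (m:ℚ) + 1 := by linarith
        have : u' < m + 1 := by exact_mod_cast hq
        omega
      have hcast : ((m - u' : ℕ) : ℚ) = (m:ℚ) - (u':ℚ) := Nat.cast_sub hum
      have ht' : t = 1 / (((m - u' : ℕ) : ℚ) + δ) := by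
        rw [hcast]
        rw [eq_div_iff (by linarith : (m:ℚ) - u' + δ ≠ 0)]
        linarith [key]
      have hdvd := ih (m - u') (by omega) δ hδ0 hδ1
        (fun j hj => hne j (le_trans hj (Nat.sub_le m u')))
        (ht' ▸ ht)
      have h4 : u' ∣ (m - u') + u' := Nat.dvd_add hdvd dvd_rfl
      rwa [Nat.sub_add_cancel hum] at h4
    · exfalso
      have ht0 : 0 < t := pos hz' ht
      linarith [h3]

lemma exists_eps (c : ℚ) (n : ℕ) :
    ∃ ε : ℚ, 0 < ε ∧ ε ≤ 1 ∧ ∀ j : ℕ, j ≤ n → 0 < c - (j:ℚ) → ε ≤ c - j := by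
  induction n with
  | zero =>
    by_cases h : 0 < c
    · refine ⟨min c 1, lt_min h one_pos, min_le_right _ _, ?_⟩
      intro j hj hc
      have hj0 : j = 0 := Nat.le_zero.mp hj
      subst hj0
      simpa using min_le_left c 1
    · refine ⟨1, one_pos, le_rfl, ?_⟩
      intro j hj hc
      have hj0 : j = 0 := Nat.le_zero.mp hj
      subst hj0
      simp only [Nat.cast_zero, sub_zero] at hc
      exact absurd hc h
  | succ n ih =>
    obtain ⟨ε, hε0, hε1, hεk⟩ := ih
    by_cases h : 0 < c - ((n+1 : ℕ):ℚ)
    · refine ⟨min ε (c - ((n+1 : ℕ):ℚ)), lt_min hε0 h,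
        le_trans (min_le_left _ _) hε1, ?_⟩
      intro j hj hc
      by_cases hj' : j ≤ n
      · exact le_trans (min_le_left _ _) (hεk j hj' hc)
      · have : j = n + 1 := by omega
        subst this
        exact min_le_right _ _
    · refine ⟨ε, hε0, hε1, ?_⟩
      intro j hj hc
      by_cases hj' : j ≤ n
      · exact hεk j hj' hc
      · have : j = n + 1 := by omega
        subst this
        exact absurd hc h

lemma eps_ne {c ε : ℚ} {n : ℕ} (hk : ∀ j : ℕ, j ≤ n → 0 < c - (j:ℚ) → ε ≤ c - j)
    {j : ℕ} (hj : j ≤ n) {w : ℚ} (hw0 : 0 < w) (hwε : w < ε) : w ≠ c - j := by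
  intro heq
  have h1 : 0 < c - (j:ℚ) := heq ▸ hw0
  have h2 := hk j hj h1
  rw [← heq] at h2
  linarith

end CWAux

open CWAux in
theorem vertex_set_containment (u v u' v' : ℕ) (hu : 0 < u) (hv : 0 < v)
    (hu' : 0 < u') (hv' : 0 < v') (z z' : ℚ) (hz : 0 < z) (hz' : 0 < z') :
    (∀ w : ℚ, CWVertex u v z w → CWVertex u' v' z' w) ↔
      (CWVertex u' v' z' z ∧ u' ∣ u ∧ v' ∣ v) := by
  constructor
  · intro H
    have hroot : CWVertex u' v' z' z := H z CWVertex.root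
    have hv1 : (1:ℚ) ≤ (v:ℚ) := by exact_mod_cast hv
    have hu1 : (1:ℚ) ≤ (u:ℚ) := by exact_mod_cast hu
    refine ⟨hroot, ?_, ?_⟩
    · -- u' ∣ u
      obtain ⟨ε, hε0, hε1, hεk⟩ := CWAux.exists_eps (1/z') u
      obtain ⟨N, hN⟩ := exists_nat_gt (1/ε)
      have hN0 : (0:ℚ) ≤ (N:ℚ) := Nat.cast_nonneg N
      have hinv1 : (1:ℚ) ≤ 1/ε := by rw [le_div_iff₀ hε0]; linarith
      have hNv : (N:ℚ) ≤ (N:ℚ) * v := by nlinarith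
      set x : ℚ := z + (N:ℚ) * v with hx
      have hx1 : 1 < x := by rw [hx]; nlinarith
      have hx0 : 0 < x := by linarith
      have hxε : 1/ε < x := by rw [hx]; nlinarith
      set δ : ℚ := 1/x with hδ
      have hδ0 : 0 < δ := by rw [hδ]; positivity
      have hδ1 : δ < 1 := by rw [hδ, div_lt_one hx0]; linarith
      have hδε : δ < ε := by
        rw [hδ, div_lt_iff₀ hx0]
        calc (1:ℚ) = ε * (1/ε) := by field_simp
        _ < ε * x := mul_lt_mul_of_pos_left hxε hε0
      have hmem : CWVertex u v z x := CWAux.right_iter CWVertex.root N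
      have hmem2 : CWVertex u' v' z' (x / ((u:ℚ) * x + 1)) := H _ hmem.left
      have hux : (0:ℚ) < (u:ℚ) * x + 1 := by nlinarith
      have heq : x / ((u:ℚ) * x + 1) = 1 / ((u:ℚ) + δ) := by
        rw [hδ]
        rw [div_eq_div_iff hux.ne' (by positivity : ((u:ℚ) + 1/x) ≠ 0)]
        field_simp
      have hne : ∀ j : ℕ, j ≤ u → 1 / ((j:ℚ) + δ) ≠ z' := by
        intro j hj heq2
        have hjδ : (0:ℚ) < (j:ℚ) + δ := by positivity
        have h3 : 1 = z' * ((j:ℚ) + δ) := (div_eq_iff hjδ.ne').mp heq2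
        have h4 : δ = 1/z' - (j:ℚ) := by
          field_simp
          linarith [h3]
        exact CWAux.eps_ne hεk hj hδ0 hδε h4
      exact CWAux.descent_u hu' hv' hz' u δ hδ0 hδ1 hne (heq ▸ hmem2)
    · -- v' ∣ v
      obtain ⟨ε, hε0, hε1, hεk⟩ := CWAux.exists_eps z' v
      have huq : (0:ℚ) < (u:ℚ) := by exact_mod_cast hu
      have hεu : (0:ℚ) < ε * u := mul_pos hε0 huq
      obtain ⟨K, hK⟩ := exists_nat_gt (1/(ε * u))
      have hK0 : (0:ℚ) ≤ (K:ℚ) := Nat.cast_nonneg K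
      have hd : (0:ℚ) < (K:ℚ) * u * z + 1 := by
        nlinarith [mul_nonneg (mul_nonneg hK0 huq.le) hz.le]
      set w : ℚ := z / ((K:ℚ) * u * z + 1) with hw
      have hw0 : 0 < w := div_pos hz hd
      have hwε : w < ε := by
        rw [hw, div_lt_iff₀ hd]
        have h1 : 1/(ε*u) * (ε*u) < K * (ε*u) := mul_lt_mul_of_pos_right hK hεu
        rw [one_div_mul_cancel hεu.ne'] at h1
        nlinarith [mul_lt_mul_of_pos_right h1 hz]
      have hw1 : w < 1 := lt_of_lt_of_le hwε hε1
      have hmemw : CWVertex u v z w := CWAux.left_iter hz CWVertex.root K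
      have hmem2 : CWVertex u' v' z' (w + (v:ℚ)) := H _ hmemw.right
      have hne : ∀ j : ℕ, j ≤ v → w + (j:ℚ) ≠ z' := by
        intro j hj heq
        exact CWAux.eps_ne hεk hj hw0 hwε (by linarith)
      exact CWAux.descent_v hu' hv' hz' v w hw0 hw1 hne hmem2
  · rintro ⟨h1, hdu, hdv⟩
    exact CWAux.backward hz' h1 hdu hdv
end
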